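/- Let (k_n) be an increasing sequence of natural numbers with k_1 > 1 whose complement in ℕ is infinite, and define x_j = 2/3^{j−1} if j ∈ {k_n} and x_j = 1/3^{j−1} otherwise. Then the series Σ x_j is fast convergent (x_n > Σ_{j>n} x_j for all n), and the sequence λ_n := r_n/r_{n−1} (where r_n = Σ_{j>n} x_j, r_0 = S) satisfies: λ ∈ (0,1/2)^ℕ, λ_1 > 1/3, λ_j < 1/3 exactly when j ∈ {k_n}, and for every r the identities 3λ_r λ_{r+1} = 4λ_r − 1, 3λ_r λ_{r+1} = 5λ_r − 2, or 6λ_r λ_{r+1} = 7λ_r − 1 hold according to whether (λ_r, λ_{r+1}) lie both on the same side of 1/3, λ_r ≥ 1/3 > λ_{r+1}, or λ_r < 1/3 ≤ λ_{r+1}, respectively. -/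

import Mathlib

open Set Filter

noncomputable section

open scoped Classical

/-- The series terms: `x_j = 2/3^{j-1}` if `j` is one of the `k_n`'s, and `x_j = 1/3^{j-1}`
otherwise (the sequence is `1`-indexed; `k` enumerates the distinguished indices). -/
def xseq (k : ℕ → ℕ) (j : ℕ) : ℝ :=
  (if j ∈ Set.range k then 2 else 1) / 3 ^ (j - 1)

/-- The remainder `r_n = Σ_{j > n} x_j` (so `r_0 = S`, the sum of the series). -/
def rrem (k : ℕ → ℕ) (n : ℕ) : ℝ := ∑' j : ℕ, xseq k (n + 1 + j)

/-- `λ_n = r_n / r_{n-1}`. -/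
def lamOf (k : ℕ → ℕ) (n : ℕ) : ℝ := rrem k n / rrem k (n - 1)

/-! Write `c_j ∈ {1, 2}` for the coefficient of `x_j`, so that `x_n = 3 c_n / 3^n` for `n ≥ 1`.
Both coefficients occur beyond every `n` (the `k_i` increase and their complement is infinite),
so comparing with geometric series gives `3/2 · 3^{-n} < r_n < 3 · 3^{-n}`. Since
`λ_n = r_n / (x_n + r_n)`, the claims `λ_n < 1/2` and `λ_n ≶ 1/3` say `r_n < x_n` and
`2 r_n ≶ x_n`, which these bounds decide according to `c_n`. Finally
`λ_r λ_{r+1} = r_{r+1} / r_{r-1}`, so each identity `α λ_r λ_{r+1} = (α + γ) λ_r - γ` is the linear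
relation `α x_{r+1} = γ x_r`, that is `α c_{r+1} = 3 γ c_r`. -/

lemma hasSum_div_three_pow_add (c : ℝ) (n : ℕ) :
    HasSum (fun j : ℕ => c / 3 ^ (n + j)) (3 * c / 2 / 3 ^ n) := by
  have h := (hasSum_geometric_of_lt_one (r := 1 / 3) (by norm_num) (by norm_num)).mul_left
    (c / 3 ^ n)
  have hterm : (fun j : ℕ => c / 3 ^ (n + j)) = fun j => c / 3 ^ n * (1 / 3) ^ j := by
    funext j
    rw [pow_add, one_div_pow]
    field_simp
  have hsum : 3 * c / 2 / 3 ^ n = c / 3 ^ n * (1 - 1 / 3)⁻¹ := by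
    field_simp
    norm_num
  rwa [hterm, hsum]

lemma mul_div_mul_div_eq {K : Type*} [Field K] {p q s α γ : K} (hp : p ≠ 0) (hq : q ≠ 0)
    (h : α * (q - s) = γ * (p - q)) : α * (q / p) * (s / q) = (α + γ) * (q / p) - γ := by
  field_simp
  linear_combination -h

def xseqCoeff (k : ℕ → ℕ) (j : ℕ) : ℝ := if j ∈ Set.range k then 2 else 1

section

variable (k : ℕ → ℕ)

lemma one_le_xseqCoeff (j : ℕ) : 1 ≤ xseqCoeff k j := by
  unfold xseqCoeff; split_ifs <;> norm_num

lemma xseqCoeff_le_two (j : ℕ) : xseqCoeff k j ≤ 2 := by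
  unfold xseqCoeff; split_ifs <;> norm_num

lemma xseq_pos (j : ℕ) : 0 < xseq k j :=
  div_pos (zero_lt_one.trans_le (one_le_xseqCoeff k j)) (by positivity)

lemma xseq_add_one_add (n j : ℕ) :
    xseq k (n + 1 + j) = xseqCoeff k (n + 1 + j) / 3 ^ (n + j) := by
  rw [xseq, xseqCoeff, Nat.add_right_comm, Nat.add_sub_cancel]

lemma xseq_eq (n : ℕ) (hn : 1 ≤ n) : xseq k n = 3 * xseqCoeff k n / 3 ^ n := by
  obtain ⟨m, rfl⟩ := Nat.exists_eq_add_of_le' hn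
  rw [xseq, Nat.add_sub_cancel, pow_succ]
  field_simp
  rfl

lemma one_div_le_xseq_add_one_add (n j : ℕ) : 1 / 3 ^ (n + j) ≤ xseq k (n + 1 + j) := by
  rw [xseq_add_one_add]; gcongr; exact one_le_xseqCoeff k _

lemma xseq_add_one_add_le (n j : ℕ) : xseq k (n + 1 + j) ≤ 2 / 3 ^ (n + j) := by
  rw [xseq_add_one_add]; gcongr; exact xseqCoeff_le_two k _

lemma summable_xseq_add_one_add (n : ℕ) : Summable fun j => xseq k (n + 1 + j) :=
  (hasSum_div_three_pow_add 2 n).summable.of_nonneg_of_le (fun _ => (xseq_pos k _).le)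
    (xseq_add_one_add_le k n)

lemma rrem_pos (n : ℕ) : 0 < rrem k n :=
  (summable_xseq_add_one_add k n).tsum_pos (fun _ => (xseq_pos k _).le) 0 (xseq_pos k _)

lemma rrem_eq_xseq_add_rrem (n : ℕ) : rrem k n = xseq k (n + 1) + rrem k (n + 1) := by
  rw [rrem, (summable_xseq_add_one_add k n).tsum_eq_zero_add, rrem]
  congr 1
  exact tsum_congr fun j => by congr 1; omega

lemma rrem_lt_three_div_of_notMem (n m : ℕ) (hnm : n < m) (hm : m ∉ Set.range k) :
    rrem k n < 3 / 3 ^ n := by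
  obtain ⟨j, rfl⟩ : ∃ j, m = n + 1 + j := ⟨m - (n + 1), by omega⟩
  have h := hasSum_lt (i := j) (xseq_add_one_add_le k n)
    (by rw [xseq_add_one_add, xseqCoeff, if_neg hm]; gcongr; norm_num)
    (summable_xseq_add_one_add k n).hasSum (hasSum_div_three_pow_add 2 n)
  norm_num at h
  exact h

lemma three_div_two_lt_rrem_of_mem (n m : ℕ) (hnm : n < m) (hm : m ∈ Set.range k) :
    3 / 2 / 3 ^ n < rrem k n := by
  obtain ⟨j, rfl⟩ : ∃ j, m = n + 1 + j := ⟨m - (n + 1), by omega⟩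
  have h := hasSum_lt (i := j) (one_div_le_xseq_add_one_add k n)
    (by rw [xseq_add_one_add, xseqCoeff, if_pos hm]; gcongr; norm_num)
    (hasSum_div_three_pow_add 1 n) (summable_xseq_add_one_add k n).hasSum
  norm_num at h
  exact h

lemma rrem_pred (n : ℕ) (hn : 1 ≤ n) : rrem k (n - 1) = xseq k n + rrem k n := by
  obtain ⟨m, rfl⟩ := Nat.exists_eq_add_of_le' hn
  exact rrem_eq_xseq_add_rrem k m

lemma lamOf_eq (n : ℕ) (hn : 1 ≤ n) : lamOf k n = rrem k n / (xseq k n + rrem k n) := by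
  rw [lamOf, rrem_pred k n hn]

lemma rrem_lt_three_div (hcompl : {j : ℕ | 1 ≤ j ∧ ∀ n, k n ≠ j}.Infinite) (n : ℕ) :
    rrem k n < 3 / 3 ^ n := by
  obtain ⟨m, ⟨-, hm⟩, hnm⟩ := hcompl.exists_gt n
  exact rrem_lt_three_div_of_notMem k n m hnm fun ⟨i, hi⟩ => hm i hi

lemma three_div_two_lt_rrem (hmono : StrictMono k) (n : ℕ) : 3 / 2 / 3 ^ n < rrem k n :=
  three_div_two_lt_rrem_of_mem k n (k (n + 1)) (Nat.lt_of_succ_le hmono.le_apply) ⟨n + 1, rfl⟩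

lemma rrem_lt_xseq (hcompl : {j : ℕ | 1 ≤ j ∧ ∀ n, k n ≠ j}.Infinite) (n : ℕ) (hn : 1 ≤ n) :
    rrem k n < xseq k n :=
  calc rrem k n < 3 / 3 ^ n := rrem_lt_three_div k hcompl n
    _ ≤ 3 * xseqCoeff k n / 3 ^ n := by gcongr; linarith [one_le_xseqCoeff k n]
    _ = xseq k n := (xseq_eq k n hn).symm

lemma two_mul_rrem_lt_xseq (hcompl : {j : ℕ | 1 ≤ j ∧ ∀ n, k n ≠ j}.Infinite) (n : ℕ)
    (hn : 1 ≤ n) (h : n ∈ Set.range k) : 2 * rrem k n < xseq k n := by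
  have hr := rrem_lt_three_div k hcompl n
  rw [xseq_eq k n hn, xseqCoeff, if_pos h]
  linarith [show (3 : ℝ) * 2 / 3 ^ n = 2 * (3 / 3 ^ n) by ring]

lemma xseq_lt_two_mul_rrem (hmono : StrictMono k) (n : ℕ) (hn : 1 ≤ n)
    (h : n ∉ Set.range k) : xseq k n < 2 * rrem k n := by
  have hr := three_div_two_lt_rrem k hmono n
  rw [xseq_eq k n hn, xseqCoeff, if_neg h]
  linarith [show (3 : ℝ) * 1 / 3 ^ n = 2 * (3 / 2 / 3 ^ n) by ring]

lemma lamOf_mem_Ioo (hcompl : {j : ℕ | 1 ≤ j ∧ ∀ n, k n ≠ j}.Infinite) (n : ℕ) (hn : 1 ≤ n) :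
    lamOf k n ∈ Ioo (0 : ℝ) (1 / 2) := by
  have hr := rrem_pos k n
  have hx := xseq_pos k n
  rw [lamOf_eq k n hn, mem_Ioo, div_lt_iff₀ (by positivity)]
  exact ⟨by positivity, by linarith [rrem_lt_xseq k hcompl n hn]⟩

lemma lamOf_lt_third_of_mem (hcompl : {j : ℕ | 1 ≤ j ∧ ∀ n, k n ≠ j}.Infinite) (n : ℕ)
    (hn : 1 ≤ n) (h : n ∈ Set.range k) : lamOf k n < 1 / 3 := by
  have hr := rrem_pos k n
  have hx := xseq_pos k n
  rw [lamOf_eq k n hn, div_lt_iff₀ (by positivity)]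
  linarith [two_mul_rrem_lt_xseq k hcompl n hn h]

lemma third_lt_lamOf_of_notMem (hmono : StrictMono k) (n : ℕ) (hn : 1 ≤ n)
    (h : n ∉ Set.range k) : 1 / 3 < lamOf k n := by
  have hr := rrem_pos k n
  have hx := xseq_pos k n
  rw [lamOf_eq k n hn, lt_div_iff₀ (by positivity)]
  linarith [xseq_lt_two_mul_rrem k hmono n hn h]

lemma lamOf_lt_third_iff (hmono : StrictMono k)
    (hcompl : {j : ℕ | 1 ≤ j ∧ ∀ n, k n ≠ j}.Infinite) (n : ℕ) (hn : 1 ≤ n) : lamOf k n < 1 / 3 ↔ n ∈ Set.range k := by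
  refine ⟨fun hlt => ?_, lamOf_lt_third_of_mem k hcompl n hn⟩
  by_contra h
  exact (third_lt_lamOf_of_notMem k hmono n hn h).not_gt hlt

lemma lamOf_quadratic (r : ℕ) (hr : 1 ≤ r) (α γ : ℝ)
    (h : α * xseqCoeff k (r + 1) = 3 * γ * xseqCoeff k r) :
    α * lamOf k r * lamOf k (r + 1) = (α + γ) * lamOf k r - γ := by
  have hx : α * xseq k (r + 1) = γ * xseq k r := by
    rw [xseq_eq k r hr, xseq_eq k (r + 1) (by omega), pow_succ]
    field_simp
    linear_combination h
  rw [lamOf, lamOf, Nat.add_sub_cancel]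
  refine mul_div_mul_div_eq (rrem_pos k _).ne' (rrem_pos k r).ne' ?_
  rw [rrem_pred k r hr, rrem_eq_xseq_add_rrem k r]
  linear_combination hx

end

/-- For an increasing sequence `(k_n)` with `k_1 > 1` and infinite complement, the series
`Σ x_j` is fast convergent, and `λ_n = r_n/r_{n-1}` satisfies `λ ∈ (0,1/2)^ℕ`, `λ_1 > 1/3`,
`λ_j < 1/3` exactly for `j ∈ {k_n}`, and the three quadratic identities from condition (07),
according to the position of `λ_r, λ_{r+1}` relative to `1/3`. -/
theorem fast_convergent_series_lambda (k : ℕ → ℕ)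
    (hmono : StrictMono k) (hk1 : 1 < k 0)
    (hcompl : {j : ℕ | 1 ≤ j ∧ ∀ n, k n ≠ j}.Infinite) :
    (∀ n, 1 ≤ n → rrem k n < xseq k n) ∧
    (∀ n, 1 ≤ n → lamOf k n ∈ Ioo (0 : ℝ) (1 / 2)) ∧
    1 / 3 < lamOf k 1 ∧
    (∀ j, 1 ≤ j → (lamOf k j < 1 / 3 ↔ j ∈ Set.range k)) ∧
    (∀ r, 1 ≤ r →
      (((1 / 3 ≤ lamOf k r ∧ 1 / 3 ≤ lamOf k (r + 1)) ∨
          (lamOf k r < 1 / 3 ∧ lamOf k (r + 1) < 1 / 3)) →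
        3 * lamOf k r * lamOf k (r + 1) = 4 * lamOf k r - 1) ∧
      ((1 / 3 ≤ lamOf k r ∧ lamOf k (r + 1) < 1 / 3) →
        3 * lamOf k r * lamOf k (r + 1) = 5 * lamOf k r - 2) ∧
      ((lamOf k r < 1 / 3 ∧ 1 / 3 ≤ lamOf k (r + 1)) →
        6 * lamOf k r * lamOf k (r + 1) = 7 * lamOf k r - 1)) := by
  have hone : 1 ∉ Set.range k := fun ⟨i, hi⟩ => by
    have := hmono.monotone (Nat.zero_le i)
    omega
  have hiff := lamOf_lt_third_iff k hmono hcompl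
  refine ⟨rrem_lt_xseq k hcompl, lamOf_mem_Ioo k hcompl,
    third_lt_lamOf_of_notMem k hmono 1 le_rfl hone, hiff, fun r hr => ?_⟩
  have hquad := lamOf_quadratic k r hr
  simp only [← not_lt, hiff r hr, hiff (r + 1) (by omega)]
  refine ⟨?_, ?_, ?_⟩
  · rintro (⟨h, h'⟩ | ⟨h, h'⟩) <;>
      convert hquad 3 1 (by simp [xseqCoeff, h, h']) using 1 <;> norm_num
  · rintro ⟨h, h'⟩
    convert hquad 3 2 (by simp [xseqCoeff, h, h']) using 1; norm_num
  · rintro ⟨h, h'⟩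
    convert hquad 6 1 (by simp [xseqCoeff, h, h']; norm_num) using 1; norm_num
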